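/- Flat-space version of the second DFT algebroid identity (Lemma 2.2(2) of the paper): for all smooth sections e₁, e₂ : ℝ^{2d} → ℝ^{2d} and every smooth function f : ℝ^{2d} → ℝ, N(e₁,e₂,Df) − (1/4) [[e₁,e₂]]^A ∂_A f = −(1/4) SC_ρ(e₁,e₂)f. -/

import Mathlib

open scoped BigOperators

noncomputable section

/-- The index involution implementing the O(d,d) metric η with matrix [[0,1],[1,0]]:
η_{AB} = 1 iff B = σd d A. -/
def σd (d : ℕ) (A : Fin (2*d)) : Fin (2*d) :=
  if h : (A : ℕ) < d then ⟨(A : ℕ) + d, by omega⟩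
  else ⟨(A : ℕ) - d, by have := A.isLt; omega⟩

/-- A section of the DFT algebroid bundle over ℝ^{2d}. -/
abbrev Sec (d : ℕ) := (Fin (2*d) → ℝ) → Fin (2*d) → ℝ

/-- Partial derivative ∂_A f at x. -/
def pd {n : ℕ} (f : (Fin n → ℝ) → ℝ) (A : Fin n) (x : Fin n → ℝ) : ℝ :=
  fderiv ℝ f x (Pi.single A 1)

/-- The pairing ⟨e₁,e₂⟩ = η_{AB} e₁^A e₂^B. -/
def pair {d : ℕ} (e₁ e₂ : Sec d) (x : Fin (2*d) → ℝ) : ℝ :=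
  ∑ A, e₁ x A * e₂ x (σd d A)

/-- The derivative D : C^∞ → Γ(L), (Df)^A = (1/2) η^{AB} ∂_B f. -/
def Dsec {d : ℕ} (f : (Fin (2*d) → ℝ) → ℝ) : Sec d :=
  fun x A => (1/2) * pd f (σd d A) x

/-- The flat C-bracket of double field theory. -/
def cbr {d : ℕ} (e₁ e₂ : Sec d) : Sec d := fun x B =>
  (∑ A, e₁ x A * pd (fun y => e₂ y B) A x
    - (1/2) * ∑ A, e₁ x A * pd (fun y => e₂ y (σd d A)) (σd d B) x)
  - (∑ A, e₂ x A * pd (fun y => e₁ y B) A x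
    - (1/2) * ∑ A, e₂ x A * pd (fun y => e₁ y (σd d A)) (σd d B) x)

/-- SC_ρ(e₁,e₂)f = (1/2) η^{BC} ∂_B f η_{AD} (e₁^A ∂_C e₂^D − e₂^A ∂_C e₁^D). -/
def SCrho {d : ℕ} (e₁ e₂ : Sec d) (f : (Fin (2*d) → ℝ) → ℝ) (x : Fin (2*d) → ℝ) : ℝ :=
  (1/2) * ∑ B, pd f B x *
    ∑ A, (e₁ x A * pd (fun y => e₂ y (σd d A)) (σd d B) x
          - e₂ x A * pd (fun y => e₁ y (σd d A)) (σd d B) x)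

/-- The Nijenhuis-type tensor N(e₁,e₂,e₃). -/
def Nform {d : ℕ} (e₁ e₂ e₃ : Sec d) (x : Fin (2*d) → ℝ) : ℝ :=
  (1/3) * (pair (cbr e₁ e₂) e₃ x + pair (cbr e₂ e₃) e₁ x + pair (cbr e₃ e₁) e₂ x)

/-- The Jacobiator of the C-bracket. -/
def Jac {d : ℕ} (e₁ e₂ e₃ : Sec d) : Sec d := fun x B =>
  cbr (cbr e₁ e₂) e₃ x B + cbr (cbr e₂ e₃) e₁ x B + cbr (cbr e₃ e₁) e₂ x B

/-- SC_Jac(e₁,e₂,e₃) = Jac(e₁,e₂,e₃) − D N(e₁,e₂,e₃). -/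
def SCJac {d : ℕ} (e₁ e₂ e₃ : Sec d) : Sec d := fun x B =>
  Jac e₁ e₂ e₃ x B - Dsec (Nform e₁ e₂ e₃) x B

/-! ### Auxiliary lemmas -/

lemma sigma_sigma (d : ℕ) (A : Fin (2*d)) : σd d (σd d A) = A := by
  have hA := A.isLt
  unfold σd
  split_ifs with h1 h2 h3 <;> apply Fin.ext
  · exact absurd (show (A:ℕ) + d < d from h2) (by omega)
  · show (A:ℕ) + d - d = A; omega
  · show (A:ℕ) - d + d = A; omega
  · exact absurd (show ¬ ((A:ℕ) - d < d) from h3) (by omega)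

lemma sigma_bij (d : ℕ) : Function.Bijective (σd d) :=
  Function.Involutive.bijective (fun A => sigma_sigma d A)

lemma contDiff_pd {n : ℕ} {f : (Fin n → ℝ) → ℝ} (hf : ContDiff ℝ (⊤ : ℕ∞) f) (A : Fin n) :
    ContDiff ℝ (⊤ : ℕ∞) (fun x => pd f A x) := by
  unfold pd
  exact (hf.fderiv_right (by simp)).clm_apply contDiff_const

lemma pd_pd_symm {n : ℕ} {f : (Fin n → ℝ) → ℝ} (hf : ContDiff ℝ (⊤ : ℕ∞) f) (i j : Fin n)
    (x : Fin n → ℝ) :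
    pd (fun y => pd f i y) j x = pd (fun y => pd f j y) i x := by
  have hdf : Differentiable ℝ (fderiv ℝ f) := (hf.fderiv_right (m := 1) (by exact WithTop.coe_le_coe.mpr le_top)).differentiable (by simp)
  have key : ∀ (u v : Fin n → ℝ), fderiv ℝ (fun y => fderiv ℝ f y u) x v
      = fderiv ℝ (fderiv ℝ f) x v u := by
    intro u v
    rw [fderiv_clm_apply (hdf.differentiableAt) (differentiableAt_const u)]
    simp
  simp only [pd]
  rw [key, key]
  exact second_derivative_symmetric (fun y => (hf.differentiable (by simp) y).hasFDerivAt)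
    (hdf x).hasFDerivAt _ _

lemma pd_Dsec {d : ℕ} {f : (Fin (2*d) → ℝ) → ℝ} (hf : ContDiff ℝ (⊤ : ℕ∞) f) (B A : Fin (2*d))
    (x : Fin (2*d) → ℝ) :
    pd (fun y => Dsec f y B) A x = (1/2) * pd (fun y => pd f (σd d B) y) A x := by
  have hdiff : DifferentiableAt ℝ (fun y => fderiv ℝ f y (Pi.single (σd d B) 1)) x := by
    have := (contDiff_pd hf (σd d B)).differentiable (by simp)
    unfold pd at this
    exact this x
  simp only [Dsec, pd]
  rw [fderiv_const_mul hdiff]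
  simp

lemma sum_antisym_zero {n : ℕ} (M : Fin n → Fin n → ℝ) (h : ∀ A B, M A B + M B A = 0) :
    ∑ B, ∑ A, M A B = 0 := by
  have h1 : (∑ B, ∑ A, M A B) = ∑ B, ∑ A, M B A := Finset.sum_comm
  have h2 : (∑ B, ∑ A, M A B) + (∑ B, ∑ A, M B A) = 0 := by
    rw [← Finset.sum_add_distrib]
    have hz : ∀ B : Fin n, ((∑ A, M A B) + (∑ A, M B A)) = 0 := by
      intro B
      rw [← Finset.sum_add_distrib]
      rw [Finset.sum_congr rfl (fun A _ => h A B)]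
      exact Finset.sum_const_zero
    rw [Finset.sum_congr rfl (fun B _ => hz B)]
    exact Finset.sum_const_zero
  linarith

lemma pair_flip {d : ℕ} (u e : Sec d) (x : Fin (2*d) → ℝ) :
    pair u e x = ∑ B, u x (σd d B) * e x B := by
  unfold pair
  refine Fintype.sum_bijective (σd d) (sigma_bij d) _ _ (fun A => ?_)
  rw [sigma_sigma]

/-- canonical double sum P -/
def Patom {d : ℕ} (e₁ e₂ : Sec d) (f : (Fin (2*d) → ℝ) → ℝ) (x : Fin (2*d) → ℝ) : ℝ :=
  ∑ A, ∑ B, pd f A x * (e₁ x B * pd (fun y => e₂ y A) B x - e₂ x B * pd (fun y => e₁ y A) B x)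

/-- canonical double sum Q -/
def Qatom {d : ℕ} (e₁ e₂ : Sec d) (f : (Fin (2*d) → ℝ) → ℝ) (x : Fin (2*d) → ℝ) : ℝ :=
  ∑ A, ∑ B, pd f A x * (e₁ x B * pd (fun y => e₂ y (σd d B)) (σd d A) x
                        - e₂ x B * pd (fun y => e₁ y (σd d B)) (σd d A) x)

/-- Hessian part of the summand -/
def HESd {d : ℕ} (e₁ e₂ : Sec d) (f : (Fin (2*d) → ℝ) → ℝ) (x : Fin (2*d) → ℝ)
    (A B : Fin (2*d)) : ℝ :=
  (e₁ x B * e₂ x A - e₂ x B * e₁ x A) *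
    ((1/2) * pd (fun y => pd f B y) A x - (1/4) * pd (fun y => pd f A y) B x)

/-- first-derivative part, reindexed form -/
def FPd {d : ℕ} (e₁ e₂ : Sec d) (f : (Fin (2*d) → ℝ) → ℝ) (x : Fin (2*d) → ℝ)
    (A B : Fin (2*d)) : ℝ :=
  pd f A x * (e₁ x B * (-(1/2) * pd (fun y => e₂ y (σd d B)) (σd d A) x
                        + (1/4) * pd (fun y => e₂ y A) B x)
            + e₂ x B * ((1/2) * pd (fun y => e₁ y (σd d B)) (σd d A) x
                        - (1/4) * pd (fun y => e₁ y A) B x))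

/-- first-derivative part, raw form -/
def FPpre {d : ℕ} (e₁ e₂ : Sec d) (f : (Fin (2*d) → ℝ) → ℝ) (x : Fin (2*d) → ℝ)
    (A B : Fin (2*d)) : ℝ :=
  pd f (σd d A) x * (e₁ x B * (-(1/2) * pd (fun y => e₂ y (σd d B)) A x
                        + (1/4) * pd (fun y => e₂ y (σd d A)) B x)
            + e₂ x B * ((1/2) * pd (fun y => e₁ y (σd d B)) A x
                        - (1/4) * pd (fun y => e₁ y (σd d A)) B x))

/-- Flat-space version of the second DFT algebroid identity (Lemma 2.2(2)). -/
theorem dft_lemma_two {d : ℕ} (hd : 1 ≤ d) (e₁ e₂ : Sec d) (f : (Fin (2*d) → ℝ) → ℝ)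
    (he₁ : ContDiff ℝ (⊤ : ℕ∞) e₁) (he₂ : ContDiff ℝ (⊤ : ℕ∞) e₂) (hf : ContDiff ℝ (⊤ : ℕ∞) f) :
    ∀ x : Fin (2*d) → ℝ,
      Nform e₁ e₂ (Dsec f) x - (1/4) * ∑ A, cbr e₁ e₂ x A * pd f A x
      = -(1/4) * SCrho e₁ e₂ f x := by
  intro x
  -- h1 : the first pairing is (1/2) T
  have h1 : pair (cbr e₁ e₂) (Dsec f) x = (1/2) * ∑ A, cbr e₁ e₂ x A * pd f A x := by
    simp only [pair, Dsec, sigma_sigma, Finset.mul_sum]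
    exact Finset.sum_congr rfl fun A _ => by ring
  -- h2 : T = P - (1/2) Q
  have h2 : (∑ A, cbr e₁ e₂ x A * pd f A x)
      = Patom e₁ e₂ f x - (1/2) * Qatom e₁ e₂ f x := by
    simp only [cbr, Patom, Qatom, Finset.sum_mul, Finset.mul_sum, sub_mul, mul_sub, add_mul,
      mul_add, ← Finset.sum_sub_distrib]
    exact Finset.sum_congr rfl fun A _ => Finset.sum_congr rfl fun B _ => by ring
  -- h3 : SCrho = (1/2) Q
  have h3 : SCrho e₁ e₂ f x = (1/2) * Qatom e₁ e₂ f x := by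
    simp only [SCrho, Qatom, Finset.mul_sum, mul_sub]
  -- h4 : the two remaining pairings
  have h4 : pair (cbr e₂ (Dsec f)) e₁ x + pair (cbr (Dsec f) e₁) e₂ x
      = (1/4) * Patom e₁ e₂ f x - (1/2) * Qatom e₁ e₂ f x := by
    rw [pair_flip, pair_flip, ← Finset.sum_add_distrib]
    have key : ∀ B, cbr e₂ (Dsec f) x (σd d B) * e₁ x B + cbr (Dsec f) e₁ x (σd d B) * e₂ x B
        = (∑ A, HESd e₁ e₂ f x A B) + (∑ A, FPpre e₁ e₂ f x A B) := by
      intro B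
      simp only [cbr]
      simp only [pd_Dsec hf]
      simp only [Dsec]
      simp only [sigma_sigma]
      simp only [HESd, FPpre, Finset.sum_mul, Finset.mul_sum, sub_mul, mul_sub, add_mul,
        mul_add, ← Finset.sum_sub_distrib, ← Finset.sum_add_distrib]
      exact Finset.sum_congr rfl fun A _ => by ring
    rw [Finset.sum_congr rfl (fun B _ => key B), Finset.sum_add_distrib]
    have hHES : (∑ B, ∑ A, HESd e₁ e₂ f x A B) = 0 := by
      refine sum_antisym_zero _ (fun A B => ?_)
      have hK := pd_pd_symm hf A B x
      simp only [HESd]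
      linear_combination (-(3/4) * (e₁ x B * e₂ x A - e₂ x B * e₁ x A)) * hK
    rw [hHES, zero_add]
    have hre : ∀ B, (∑ A, FPpre e₁ e₂ f x A B) = ∑ A, FPd e₁ e₂ f x A B := by
      intro B
      refine Fintype.sum_bijective (σd d) (sigma_bij d) _ _ (fun A => ?_)
      simp only [FPpre, FPd, sigma_sigma]
    rw [Finset.sum_congr rfl (fun B _ => hre B), Finset.sum_comm]
    simp only [Patom, Qatom, FPd, Finset.mul_sum, ← Finset.sum_sub_distrib]
    exact Finset.sum_congr rfl fun A _ => Finset.sum_congr rfl fun B _ => by ring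
  simp only [Nform]
  linarith [h1, h2, h3, h4]

end
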